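/- arXiv:1701.04981 — 3 statements merged into one kernel-verified Lean document; each statement's English description precedes it below -/
import Mathlib

section
/- For t ∈ (0,1) and a C² function f : ℝ → ℝ with f(t) > 0, f'(t) ≥ 0, f''(t) ≥ 0, f(t) - t f'(t) > 0 and 1 + f(t)² - t² - 2 t f(t) f'(t) > 0, suppose f satisfies the ODE f''/(1+(f')²) = 1/f + 4(f - t f')/(1 - t² - f²) on an interval where 1 - t² - f² > 0. Then the function G(t) = (1 + f² - t² - 2 t f f')·(f - t f') is non-increasing, i.e. G'(t) ≤ 0. -/
/-!
Writing `A = 1 + f² - t² - 2tff'` and `B = f - tf'`, the first-order terms cancel on differentiating: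
`A' = -2t(1 + f'² + ff'')` and `B' = -tf''`. Hence `G' = -t(2(1 + f'² + ff'')B + f''A)`, which the
sign conditions make non-positive.
-/

section

variable {f g : ℝ → ℝ} {t c : ℝ}

theorem hasDerivAt_sub_id_mul (hf : HasDerivAt f (g t) t) (hg : HasDerivAt g c t) :
    HasDerivAt (fun s => f s - s * g s) (-(t * c)) t :=
  (hf.sub ((hasDerivAt_id' t).mul hg)).congr_deriv (by ring)

theorem hasDerivAt_one_add_sq_sub_sq_sub_two_mul_mul_mul (hf : HasDerivAt f (g t) t)
    (hg : HasDerivAt g c t) :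
    HasDerivAt (fun s => 1 + f s ^ 2 - s ^ 2 - 2 * s * f s * g s)
      (-(2 * t * (1 + g t ^ 2 + f t * c))) t :=
  ((((hf.pow 2).const_add 1).sub ((hasDerivAt_id' t).pow 2)).sub
    ((((hasDerivAt_id' t).const_mul 2).mul hf).mul hg)).congr_deriv
      (by simp only [Pi.mul_apply]; ring)

theorem hasDerivAt_numerator (hf : HasDerivAt f (g t) t) (hg : HasDerivAt g c t) :
    HasDerivAt (fun s => (1 + f s ^ 2 - s ^ 2 - 2 * s * f s * g s) * (f s - s * g s))
      (-(2 * t * (1 + g t ^ 2 + f t * c)) * (f t - t * g t)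
        + (1 + f t ^ 2 - t ^ 2 - 2 * t * f t * g t) * -(t * c)) t :=
  (hasDerivAt_one_add_sq_sub_sq_sub_two_mul_mul_mul hf hg).mul (hasDerivAt_sub_id_mul hf hg)

end

theorem numerator_nonincreasing_general (f : ℝ → ℝ) (t : ℝ)
    (hf : ContDiff ℝ 2 f) (ht : t ∈ Set.Ioo (0 : ℝ) 1)
    (hfpos : 0 < f t) (hf'' : 0 ≤ deriv (deriv f) t)
    (hsupp : 0 < f t - t * deriv f t)
    (hnum : 0 < 1 + f t ^ 2 - t ^ 2 - 2 * t * f t * deriv f t) :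
    deriv (fun s => (1 + f s ^ 2 - s ^ 2 - 2 * s * f s * deriv f s)
      * (f s - s * deriv f s)) t ≤ 0 := by
  have hf₁ : HasDerivAt f (deriv f t) t :=
    (hf.differentiable (by norm_num) t).hasDerivAt
  have hf₂ : HasDerivAt (deriv f) (deriv (deriv f) t) t :=
    (hf.differentiable_deriv_two t).hasDerivAt
  rw [(hasDerivAt_numerator hf₁ hf₂).deriv]
  have hfactor : 0 ≤ 1 + deriv f t ^ 2 + f t * deriv (deriv f) t := by positivity
  linarith [mul_nonneg (mul_nonneg ht.1.le hfactor) hsupp.le,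
    mul_nonneg (mul_nonneg ht.1.le hf'') hnum.le]

/-- The numerator G(t) = (1 + f² - t² - 2tff')(f - tf') of the pinching quantity
is non-increasing at t under the sign conditions and the minimal-surface ODE. -/
theorem numerator_nonincreasing (f : ℝ → ℝ) (t : ℝ)
    (hf : ContDiff ℝ 2 f) (ht : t ∈ Set.Ioo (0 : ℝ) 1)
    (hfpos : 0 < f t) (hf' : 0 ≤ deriv f t) (hf'' : 0 ≤ deriv (deriv f) t)
    (hsupp : 0 < f t - t * deriv f t)
    (hnum : 0 < 1 + f t ^ 2 - t ^ 2 - 2 * t * f t * deriv f t)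
    (hin : 0 < 1 - t ^ 2 - f t ^ 2)
    (hode : deriv (deriv f) t / (1 + (deriv f t) ^ 2)
      = 1 / f t + 4 * (f t - t * deriv f t) / (1 - t ^ 2 - f t ^ 2)) :
    deriv (fun s => (1 + f s ^ 2 - s ^ 2 - 2 * s * f s * deriv f s)
      * (f s - s * deriv f s)) t ≤ 0 :=
  numerator_nonincreasing_general f t hf ht hfpos hf'' hsupp hnum
end

section
/- Let ρ(z) = 2/(1 - |z|²) on the open unit ball of ℝ³, and let Σ be a surface with Euclidean unit normal N̄ and Euclidean principal curvatures κ̄₁, κ̄₂. For the rotational surface z(t,θ) = (t, f(t)cos θ, f(t)sin θ), the hyperbolic principal curvatures κᵢ = κ̄ᵢ/ρ - N̄(ρ)/ρ² satisfy: κ₁ + κ₂ = 0 if and only if f''/(1+(f')²) = 1/f + 4(f - t f')/(1 - t² - f²). -/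
/-- Minimality (κ₁ + κ₂ = 0) of the rotational surface in the Poincaré ball model
is equivalent to the ODE f''/(1+(f')²) = 1/f + 4(f - tf')/(1 - t² - f²). -/
theorem minimality_iff_ode (f : ℝ → ℝ) (t : ℝ) (hf : ContDiff ℝ 2 f)
    (hfpos : 0 < f t) (hin : t ^ 2 + f t ^ 2 < 1) :
    let f' := deriv f t
    let f'' := deriv (deriv f) t
    let ρ : ℝ := 2 / (1 - (t ^ 2 + f t ^ 2))
    let Nρ : ℝ := 4 * (t * f' - f t) /
      ((1 - (t ^ 2 + f t ^ 2)) ^ 2 * Real.sqrt (1 + f' ^ 2))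
    let κ₁ : ℝ := (-f'' / (1 + f' ^ 2) ^ ((3 : ℝ) / 2)) / ρ - Nρ / ρ ^ 2
    let κ₂ : ℝ := (1 / (f t * Real.sqrt (1 + f' ^ 2))) / ρ - Nρ / ρ ^ 2
    (κ₁ + κ₂ = 0 ↔
      f'' / (1 + f' ^ 2) = 1 / f t + 4 * (f t - t * f') / (1 - t ^ 2 - f t ^ 2)) := by
  intro f' f'' ρ Nρ κ₁ κ₂
  set s : ℝ := Real.sqrt (1 + f' ^ 2) with hs_def
  have h1pos : (0:ℝ) < 1 + f' ^ 2 := by positivity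
  have hs_pos : 0 < s := Real.sqrt_pos.mpr h1pos
  have hs2 : s ^ 2 = 1 + f' ^ 2 := Real.sq_sqrt h1pos.le
  have hD : (0:ℝ) < 1 - (t ^ 2 + f t ^ 2) := by linarith
  have hrpow : (1 + f' ^ 2) ^ ((3 : ℝ) / 2) = s ^ 3 := by
    have : (1 + f' ^ 2) ^ ((3 : ℝ) / 2) = (1 + f' ^ 2) * (1 + f' ^ 2) ^ ((1:ℝ)/2) := by
      rw [show (3:ℝ)/2 = 1 + (1:ℝ)/2 by norm_num, Real.rpow_add h1pos, Real.rpow_one]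
    rw [this, ← Real.sqrt_eq_rpow, ← hs_def, ← hs2]; ring
  have key : κ₁ + κ₂ = ((1 - (t ^ 2 + f t ^ 2)) / (2 * s)) *
      ((1 / f t + 4 * (f t - t * f') / (1 - t ^ 2 - f t ^ 2)) - f'' / (1 + f' ^ 2)) := by
    show (-f'' / (1 + f' ^ 2) ^ ((3 : ℝ) / 2)) / ρ - Nρ / ρ ^ 2
        + ((1 / (f t * s)) / ρ - Nρ / ρ ^ 2) = _
    rw [hrpow]
    have hρ : ρ = 2 / (1 - (t ^ 2 + f t ^ 2)) := rfl
    have hN : Nρ = 4 * (t * f' - f t) / ((1 - (t ^ 2 + f t ^ 2)) ^ 2 * s) := rfl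
    rw [hρ, hN, ← hs2]
    have hD' : (1:ℝ) - t ^ 2 - f t ^ 2 ≠ 0 := by linarith
    field_simp
    ring
  rw [key, mul_eq_zero, sub_eq_zero]
  constructor
  · rintro (h | h)
    · exact absurd h (by positivity)
    · exact h.symm
  · intro h; exact Or.inr h.symm
end

section
/- Let f : ℝ → ℝ be C² with, on an interval (0,a): f > 0, f' ≥ 0, f'' ≥ 0, f − t f' > 0, 1 + f² − t² − 2 t f f' > 0, and suppose at t = 0 one has f'(0) = 0 so that (1 + f² − t² − 2 t f f')(f − t f') / (f(1+(f')²)(1+t²+f²)) evaluates to 1 at t = 0. If additionally f(a) − a f'(a) = 0, then the quantity Q(t) = (1 + f² − t² − 2 t f f')(f − t f')/(f(1+(f')²)(1+t²+f²)) satisfies Q(0) = 1, Q(a) = 0, and Q is non-increasing on [0,a] (hence 0 ≤ Q ≤ 1 on [0,a]). -/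
/-!
Write `Q = N / D` with `N = (1 + f² - t² - 2tff')(f - tf')` and `D = f(1 + f'²)(1 + t² + f²)`.
The derivatives of the factors are `-2t(1 + f'² + ff'')`, `-tf''`, `f'(1 + f'²) + 2ff'f''` and
`2(t + ff')`, so under the sign conditions `N` is non-increasing and `D` non-decreasing on `[0, a]`.
As `N(a) = 0` and `D(0) > 0`, `N ≥ 0` and `D > 0` there, so `Q` is non-increasing;
`f'(0) = 0` gives `Q(0) = 1`.
-/

open Set

theorem AntitoneOn.div_of_monotoneOn {α 𝕜 : Type*} [Preorder α] [Field 𝕜] [LinearOrder 𝕜]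
    [IsStrictOrderedRing 𝕜] {s : Set α} {N D : α → 𝕜} (hN : AntitoneOn N s)
    (hD : MonotoneOn D s) (hN₀ : ∀ x ∈ s, 0 ≤ N x) (hD₀ : ∀ x ∈ s, 0 < D x) :
    AntitoneOn (fun x => N x / D x) s := fun _ hx _ hy hxy =>
  div_le_div₀ (hN₀ _ hx) (hN hx hy hxy) (hD₀ _ hx) (hD hx hy hxy)

namespace Pinching

variable {f : ℝ → ℝ} {a t : ℝ}

noncomputable def num (f : ℝ → ℝ) (t : ℝ) : ℝ :=
  (1 + f t ^ 2 - t ^ 2 - 2 * t * f t * deriv f t) * (f t - t * deriv f t)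

noncomputable def den (f : ℝ → ℝ) (t : ℝ) : ℝ :=
  f t * (1 + deriv f t ^ 2) * (1 + t ^ 2 + f t ^ 2)

theorem hasDerivAt_num (h₁ : DifferentiableAt ℝ f t) (h₂ : DifferentiableAt ℝ (deriv f) t) :
    HasDerivAt (num f)
      (-2 * t * (1 + deriv f t ^ 2 + f t * deriv (deriv f) t) * (f t - t * deriv f t)
        + (1 + f t ^ 2 - t ^ 2 - 2 * t * f t * deriv f t) * -(t * deriv (deriv f) t)) t := by
  have hA : HasDerivAt (fun s => 1 + f s ^ 2 - s ^ 2 - 2 * s * f s * deriv f s)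
      (-2 * t * (1 + deriv f t ^ 2 + f t * deriv (deriv f) t)) t := by
    refine ((((hasDerivAt_const t (1 : ℝ)).add (h₁.hasDerivAt.pow 2)).sub
      ((hasDerivAt_id t).pow 2)).sub ((((hasDerivAt_id t).const_mul 2).mul h₁.hasDerivAt).mul
        h₂.hasDerivAt)).congr_deriv ?_
    simp only [id, Nat.cast_ofNat, Pi.mul_apply]
    ring
  have hB : HasDerivAt (fun s => f s - s * deriv f s) (-(t * deriv (deriv f) t)) t := by
    refine (h₁.hasDerivAt.sub ((hasDerivAt_id t).mul h₂.hasDerivAt)).congr_deriv ?_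
    simp only [id]
    ring
  exact hA.mul hB

theorem hasDerivAt_den (h₁ : DifferentiableAt ℝ f t) (h₂ : DifferentiableAt ℝ (deriv f) t) :
    HasDerivAt (den f)
      ((deriv f t * (1 + deriv f t ^ 2) + 2 * f t * deriv f t * deriv (deriv f) t)
          * (1 + t ^ 2 + f t ^ 2)
        + f t * (1 + deriv f t ^ 2) * (2 * (t + f t * deriv f t))) t := by
  have hP : HasDerivAt (fun s => f s * (1 + deriv f s ^ 2))
      (deriv f t * (1 + deriv f t ^ 2) + 2 * f t * deriv f t * deriv (deriv f) t) t := by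
    refine (h₁.hasDerivAt.mul
      ((hasDerivAt_const t (1 : ℝ)).add (h₂.hasDerivAt.pow 2))).congr_deriv ?_
    simp only [Nat.cast_ofNat, Pi.add_apply, Pi.pow_apply]
    ring
  have hR : HasDerivAt (fun s => 1 + s ^ 2 + f s ^ 2) (2 * (t + f t * deriv f t)) t := by
    refine (((hasDerivAt_const t (1 : ℝ)).add ((hasDerivAt_id t).pow 2)).add
      (h₁.hasDerivAt.pow 2)).congr_deriv ?_
    simp only [id, Nat.cast_ofNat]
    ring
  exact hP.mul hR

theorem antitoneOn_num (hf : ContDiff ℝ 2 f)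
    (hfpos : ∀ t ∈ Ioo 0 a, 0 < f t)
    (hf'' : ∀ t ∈ Ioo 0 a, 0 ≤ deriv (deriv f) t)
    (hsupp : ∀ t ∈ Ioo 0 a, 0 < f t - t * deriv f t)
    (hnum : ∀ t ∈ Ioo 0 a, 0 < 1 + f t ^ 2 - t ^ 2 - 2 * t * f t * deriv f t) :
    AntitoneOn (num f) (Icc 0 a) := by
  have hderiv := fun t => hasDerivAt_num (hf.differentiable two_ne_zero t)
    (hf.differentiable_deriv_two t)
  refine antitoneOn_of_deriv_nonpos (convex_Icc 0 a)
    (fun t _ => (hderiv t).continuousAt.continuousWithinAt)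
    (fun t _ => (hderiv t).differentiableAt.differentiableWithinAt) fun t ht => ?_
  rw [interior_Icc] at ht
  rw [(hderiv t).deriv]
  have ht₀ : 0 < t := ht.1
  have hcurv : 0 ≤ 1 + deriv f t ^ 2 + f t * deriv (deriv f) t := by
    have := mul_nonneg (hfpos t ht).le (hf'' t ht)
    positivity
  have hfirst : -2 * t * (1 + deriv f t ^ 2 + f t * deriv (deriv f) t) ≤ 0 := by
    nlinarith [mul_nonneg ht₀.le hcurv]
  have hsecond : -(t * deriv (deriv f) t) ≤ 0 := neg_nonpos.2 (mul_nonneg ht₀.le (hf'' t ht))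
  nlinarith [mul_nonpos_of_nonpos_of_nonneg hfirst (hsupp t ht).le,
    mul_nonpos_of_nonneg_of_nonpos (hnum t ht).le hsecond]

theorem monotoneOn_den (hf : ContDiff ℝ 2 f)
    (hfpos : ∀ t ∈ Ioo 0 a, 0 < f t)
    (hf' : ∀ t ∈ Ioo 0 a, 0 ≤ deriv f t)
    (hf'' : ∀ t ∈ Ioo 0 a, 0 ≤ deriv (deriv f) t) :
    MonotoneOn (den f) (Icc 0 a) := by
  have hderiv := fun t => hasDerivAt_den (hf.differentiable two_ne_zero t)
    (hf.differentiable_deriv_two t)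
  refine monotoneOn_of_deriv_nonneg (convex_Icc 0 a)
    (fun t _ => (hderiv t).continuousAt.continuousWithinAt)
    (fun t _ => (hderiv t).differentiableAt.differentiableWithinAt) fun t ht => ?_
  rw [interior_Icc] at ht
  rw [(hderiv t).deriv]
  have ht₀ : 0 < t := ht.1
  have h₀ := hfpos t ht
  have h₁ := hf' t ht
  have h₂ := hf'' t ht
  positivity

theorem den_zero_pos (hf₀ : 0 < f 0) : 0 < den f 0 := by
  unfold den
  positivity

theorem num_zero_div_den_zero (hf₀ : 0 < f 0) (hf'₀ : deriv f 0 = 0) :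
    num f 0 / den f 0 = 1 := by
  rw [div_eq_one_iff_eq (den_zero_pos hf₀).ne']
  simp only [num, den, hf'₀]
  ring

theorem num_eq_zero_of_sub_mul_deriv_eq_zero (hend : f a - a * deriv f a = 0) : num f a = 0 := by
  rw [num, hend, mul_zero]

end Pinching

theorem pinching_quantity_monotone_general (f : ℝ → ℝ) (a : ℝ)
    (hf : ContDiff ℝ 2 f) (hf0 : 0 < f 0) (hf'0 : deriv f 0 = 0)
    (hfpos : ∀ t ∈ Set.Ioo 0 a, 0 < f t)
    (hf' : ∀ t ∈ Set.Ioo 0 a, 0 ≤ deriv f t)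
    (hf'' : ∀ t ∈ Set.Ioo 0 a, 0 ≤ deriv (deriv f) t)
    (hsupp : ∀ t ∈ Set.Ioo 0 a, 0 < f t - t * deriv f t)
    (hnum : ∀ t ∈ Set.Ioo 0 a, 0 < 1 + f t ^ 2 - t ^ 2 - 2 * t * f t * deriv f t)
    (hend : f a - a * deriv f a = 0) :
    let Q : ℝ → ℝ := fun t =>
      (1 + f t ^ 2 - t ^ 2 - 2 * t * f t * deriv f t) * (f t - t * deriv f t)
        / (f t * (1 + (deriv f t) ^ 2) * (1 + t ^ 2 + f t ^ 2))
    Q 0 = 1 ∧ Q a = 0 ∧ AntitoneOn Q (Set.Icc 0 a) ∧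
      ∀ t ∈ Set.Icc 0 a, 0 ≤ Q t ∧ Q t ≤ 1 := by
  intro Q
  have hN := Pinching.antitoneOn_num hf hfpos hf'' hsupp hnum
  have hD := Pinching.monotoneOn_den hf hfpos hf' hf''
  have hNa := Pinching.num_eq_zero_of_sub_mul_deriv_eq_zero hend
  have hQ₀ : Q 0 = 1 := Pinching.num_zero_div_den_zero hf0 hf'0
  have hQa : Q a = 0 := by simp only [Q, ← Pinching.num.eq_def, hNa, zero_div]
  have hQ : AntitoneOn Q (Icc 0 a) :=
    hN.div_of_monotoneOn hD
      (fun t ht => hNa ▸ hN ht ⟨ht.1.trans ht.2, le_rfl⟩ ht.2)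
      (fun t ht => (Pinching.den_zero_pos hf0).trans_le (hD ⟨le_rfl, ht.1.trans ht.2⟩ ht ht.1))
  refine ⟨hQ₀, hQa, hQ, fun t ht => ⟨?_, ?_⟩⟩
  · exact hQa ▸ hQ ht ⟨ht.1.trans ht.2, le_rfl⟩ ht.2
  · exact hQ₀ ▸ hQ ⟨le_rfl, ht.1.trans ht.2⟩ ht ht.1

/-- The pinching quantity Q(t) = (1+f²-t²-2tff')(f-tf')/(f(1+(f')²)(1+t²+f²))
satisfies Q(0) = 1, Q(a) = 0 and is non-increasing on [0,a]; hence 0 ≤ Q ≤ 1. -/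
theorem pinching_quantity_monotone (f : ℝ → ℝ) (a : ℝ) (ha : 0 < a)
    (hf : ContDiff ℝ 2 f) (hf0 : 0 < f 0) (hf'0 : deriv f 0 = 0)
    (hfpos : ∀ t ∈ Set.Ioo 0 a, 0 < f t)
    (hf' : ∀ t ∈ Set.Ioo 0 a, 0 ≤ deriv f t)
    (hf'' : ∀ t ∈ Set.Ioo 0 a, 0 ≤ deriv (deriv f) t)
    (hsupp : ∀ t ∈ Set.Ioo 0 a, 0 < f t - t * deriv f t)
    (hnum : ∀ t ∈ Set.Ioo 0 a, 0 < 1 + f t ^ 2 - t ^ 2 - 2 * t * f t * deriv f t)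
    (hend : f a - a * deriv f a = 0) :
    let Q : ℝ → ℝ := fun t =>
      (1 + f t ^ 2 - t ^ 2 - 2 * t * f t * deriv f t) * (f t - t * deriv f t)
        / (f t * (1 + (deriv f t) ^ 2) * (1 + t ^ 2 + f t ^ 2))
    Q 0 = 1 ∧ Q a = 0 ∧ AntitoneOn Q (Set.Icc 0 a) ∧
      ∀ t ∈ Set.Icc 0 a, 0 ≤ Q t ∧ Q t ≤ 1 :=
  pinching_quantity_monotone_general f a hf hf0 hf'0 hfpos hf' hf'' hsupp hnum hend
end
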